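/- arXiv:2208.06733 — 5 statements merged into one kernel-verified Lean document; each statement's English description precedes it below -/
import Mathlib

section
/- Let A# be the universal axiomatic semantics with Stages = {S, T} and the two axioms ax0: ∀i1. hb(i1.S, i1.T) and ax1: ∀i1,i2. hb(i1.S, i2.S) ⇒ hb(i1.T, i2.T). There is a constant c > 0 such that for every m ≥ 1, taking P to be the single-core program with m instructions, every operational model M = (Q, Δ, q_init, q_final) that is sound and complete with respect to A# on P (even with unbounded history h = ∞) satisfies |Q| ≥ c · 2^m / m. -/
namespace USpec

/-- An instruction: its core identifier, its label (index in the instruction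
stream), and its operation. -/
structure Instr (Core Op : Type) where
  core : Core
  lbl  : ℕ
  op   : Op
  deriving DecidableEq

/-- An event `i.st`: instruction `i` performing at stage `st`. -/
structure Event (Core Stage Op : Type) where
  instr : Instr Core Op
  stage : Stage
  deriving DecidableEq

/-- A program: a finite instruction stream for each core. -/
abbrev Program (Core Op : Type) := Core → List Op

/-- The set of instructions of a program. -/
def instrs {Core Op : Type} (P : Program Core Op) : Set (Instr Core Op) :=
  {i | (P i.core)[i.lbl]? = some i.op}

/-- The events generated by a set of instructions. -/
def eventsOf {Core Op : Type} (Stage : Type) (I : Set (Instr Core Op)) :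
    Set (Event Core Stage Op) :=
  {e | e.instr ∈ I}

/-- The set of events of a program: one event per instruction and stage. -/
def events {Core Op : Type} (Stage : Type) (P : Program Core Op) :
    Set (Event Core Stage Op) :=
  eventsOf Stage (instrs P)

/-- Reference (program) order on instructions: same core, smaller label. -/
def refLt {Core Op : Type} (i' i : Instr Core Op) : Prop :=
  i'.core = i.core ∧ i'.lbl < i.lbl

/-- Quantifier-free part of a universal μspec axiom with `k` quantified
instruction variables: Boolean combinations of reference-order atoms,
happens-before atoms, and predicate-application atoms. -/
inductive Phi (k : ℕ) (Stage PSym : Type) (ar : PSym → ℕ) : Type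
  | refOrd (a b : Fin k)
  | hb (a : Fin k) (st : Stage) (b : Fin k) (st' : Stage)
  | pred (p : PSym) (args : Fin (ar p) → Fin k)
  | conj (φ ψ : Phi k Stage PSym ar)
  | disj (φ ψ : Phi k Stage PSym ar)
  | neg (φ : Phi k Stage PSym ar)

/-- A universal axiom `∀ i1 ⋯ ∀ ik, φ(i1,…,ik)`. -/
structure UAxiom (Stage PSym : Type) (ar : PSym → ℕ) where
  k : ℕ
  phi : Phi k Stage PSym ar

/-- Evaluation of the quantifier-free part `φ` under an assignment `s` of the
variables to instructions, where `R` is the happens-before relation (the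
transitive closure of the edges of the graph under consideration) and
`interp` interprets the predicate symbols over operations. -/
def Sat {Core Stage Op PSym : Type} {ar : PSym → ℕ} {k : ℕ}
    (interp : ∀ p : PSym, (Fin (ar p) → Op) → Prop)
    (R : Event Core Stage Op → Event Core Stage Op → Prop)
    (s : Fin k → Instr Core Op) : Phi k Stage PSym ar → Prop
  | .refOrd a b => refLt (s a) (s b)
  | .hb a st b st' => R ⟨s a, st⟩ ⟨s b, st'⟩
  | .pred p args => interp p fun j => (s (args j)).op
  | .conj φ ψ => Sat interp R s φ ∧ Sat interp R s ψ
  | .disj φ ψ => Sat interp R s φ ∨ Sat interp R s ψ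
  | .neg φ => ¬ Sat interp R s φ

/-- Satisfaction of a universal axiom relative to an instruction set `I` and a
happens-before relation `R`: the body must hold for every injective assignment
of the variables to instructions of `I`. -/
def SatAx {Core Stage Op PSym : Type} {ar : PSym → ℕ}
    (interp : ∀ p : PSym, (Fin (ar p) → Op) → Prop)
    (I : Set (Instr Core Op))
    (R : Event Core Stage Op → Event Core Stage Op → Prop)
    (ax : UAxiom Stage PSym ar) : Prop :=
  ∀ s : Fin ax.k → Instr Core Op, Function.Injective s → (∀ a, s a ∈ I) →
    Sat interp R s ax.phi

/-- Acyclicity of an edge relation. -/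
def Acyclic {α : Type} (E : α → α → Prop) : Prop :=
  ∀ x, ¬ Relation.TransGen E x x

/-- `E` is (the edge relation of) a μhb graph on vertex set `V`: all edges are
between vertices of `V` and the graph is acyclic (a DAG). -/
def IsMuHb {Core Stage Op : Type} (V : Set (Event Core Stage Op))
    (E : Event Core Stage Op → Event Core Stage Op → Prop) : Prop :=
  (∀ e1 e2, E e1 e2 → e1 ∈ V ∧ e2 ∈ V) ∧ Acyclic E

/-- Satisfaction of a universal axiom by a μhb graph (with edges `E`) relative
to an instruction set `I`: happens-before is the transitive closure of `E`. -/
def GraphSatAx {Core Stage Op PSym : Type} {ar : PSym → ℕ}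
    (interp : ∀ p : PSym, (Fin (ar p) → Op) → Prop)
    (I : Set (Instr Core Op))
    (E : Event Core Stage Op → Event Core Stage Op → Prop)
    (ax : UAxiom Stage PSym ar) : Prop :=
  SatAx interp I (Relation.TransGen E) ax

/-- `G ⊨_P A`: the μhb graph with edges `E` satisfies every axiom of the
axiomatic semantics `A` for program `P`. -/
def Models {Core Stage Op PSym : Type} {ar : PSym → ℕ}
    (interp : ∀ p : PSym, (Fin (ar p) → Op) → Prop)
    (P : Program Core Op)
    (E : Event Core Stage Op → Event Core Stage Op → Prop)
    (A : List (UAxiom Stage PSym ar)) : Prop :=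
  ∀ ax ∈ A, GraphSatAx interp (instrs P) E ax

/-- `G ⊑ G'` (on a common vertex set): `E⁺ ⊆ E'⁺`. -/
def Refines {Core Stage Op : Type}
    (E E' : Event Core Stage Op → Event Core Stage Op → Prop) : Prop :=
  ∀ e1 e2, Relation.TransGen E e1 e2 → Relation.TransGen E' e1 e2

/-- A graph is linear on `V` if its transitive closure totally orders `V`. -/
def Linear {Core Stage Op : Type} (V : Set (Event Core Stage Op))
    (E : Event Core Stage Op → Event Core Stage Op → Prop) : Prop :=
  ∀ e1 ∈ V, ∀ e2 ∈ V, e1 ≠ e2 →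
    Relation.TransGen E e1 e2 ∨ Relation.TransGen E e2 e1

/-- Refinability of an axiomatic semantics: for every program, every
linearization of a valid μhb graph is valid. -/
def Refinable {Core Stage Op PSym : Type} {ar : PSym → ℕ}
    (interp : ∀ p : PSym, (Fin (ar p) → Op) → Prop)
    (A : List (UAxiom Stage PSym ar)) : Prop :=
  ∀ (P : Program Core Op)
    (E E' : Event Core Stage Op → Event Core Stage Op → Prop),
    IsMuHb (events Stage P) E → Models interp P E A →
    IsMuHb (events Stage P) E' → Linear (events Stage P) E' → Refines E E' →
    Models interp P E' A

/-- The strict order of a list: `x` occurs (at some position) strictly before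
`y`.  For a duplicate-free list this is the happens-before relation of the
linear μhb graph `σ[0] → σ[1] → ⋯`. -/
def listEdge {α : Type} (σ : List α) (x y : α) : Prop :=
  ∃ m n : ℕ, m < n ∧ σ[m]? = some x ∧ σ[n]? = some y

/-- `σ ∈ events(P)^perm`: the word `σ` contains each event of `P` exactly
once. -/
def IsPermTrace {Core Stage Op : Type} (P : Program Core Op)
    (σ : List (Event Core Stage Op)) : Prop :=
  σ.Nodup ∧ ∀ e, e ∈ σ ↔ e ∈ events Stage P

/-- `σ` is a linearization of the μhb graph with edges `E` on `events(P)`. -/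
def IsLinearization {Core Stage Op : Type} (P : Program Core Op)
    (E : Event Core Stage Op → Event Core Stage Op → Prop)
    (σ : List (Event Core Stage Op)) : Prop :=
  IsPermTrace P σ ∧ ∀ e1 e2, Relation.TransGen E e1 e2 → listEdge σ e1 e2

/-- Satisfaction of an axiomatic semantics by a trace `σ`, viewed as the
linear μhb graph `σ[0] → σ[1] → ⋯`. -/
def TraceModels {Core Stage Op PSym : Type} {ar : PSym → ℕ}
    (interp : ∀ p : PSym, (Fin (ar p) → Op) → Prop)
    (P : Program Core Op) (σ : List (Event Core Stage Op))
    (A : List (UAxiom Stage PSym ar)) : Prop :=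
  ∀ ax ∈ A, SatAx interp (instrs P) (listEdge σ) ax

/-- Actions of an operational model: move the tape head of core `c` right,
stay silent, schedule (emit) the event of the `idx`-th instruction left of the
head of core `c` at stage `st`, or drop the `idx`-th instruction left of the
head of core `c`. -/
inductive Act (Core Stage : Type) : Type
  | right (c : Core)
  | stay
  | sched (c : Core) (idx : ℕ) (st : Stage)
  | drop (c : Core) (idx : ℕ)

/-- An operational model `M = (Q, Δ, q_init, q_final)` with history bound
`hist ∈ ℕ ∪ {∞}`.  Transitions are guarded by the instructions currently under
the tape heads (`none` standing for `−`), and `q_final` is absorbing. -/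
structure OpModel (Core Stage Op Q : Type) where
  hist : ℕ∞
  Δ : Set (Q × (Core → Option (Instr Core Op)) × Q × Act Core Stage)
  qinit : Q
  qfinal : Q
  absorbing : ∀ g q' a, (qfinal, g, q', a) ∈ Δ → q' = qfinal

/-- A configuration `(U, q, V)`: tape contents to the left (`U`) and right
(`V`) of each core's head, and the current control state `q`. -/
structure Config (Core Op Q : Type) where
  U : Core → List (Instr Core Op)
  q : Q
  V : Core → List (Instr Core Op)

/-- The instructions currently under the tape heads. -/
def heads {Core Op : Type} (V : Core → List (Instr Core Op)) :
    Core → Option (Instr Core Op) :=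
  fun c => (V c).head?

/-- A configuration is allowed if each left tape content has length at most
the history bound `h`. -/
def Allowed {Core Op Q : Type} (h : ℕ∞) (γ : Config Core Op Q) : Prop :=
  ∀ c, ((γ.U c).length : ℕ∞) ≤ h

/-- One step of the operational model, optionally emitting an event. -/
inductive Step {Core Stage Op Q : Type} [DecidableEq Core]
    (M : OpModel Core Stage Op Q) :
    Config Core Op Q → Option (Event Core Stage Op) → Config Core Op Q → Prop
  | right {q q' : Q} {U V : Core → List (Instr Core Op)} {c : Core}
      {i : Instr Core Op} {rest : List (Instr Core Op)} :
      (q, heads V, q', Act.right c) ∈ M.Δ → V c = i :: rest →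
      Step M ⟨U, q, V⟩ none
        ⟨Function.update U c (U c ++ [i]), q', Function.update V c rest⟩
  | stay {q q' : Q} {U V : Core → List (Instr Core Op)} :
      (q, heads V, q', Act.stay) ∈ M.Δ →
      Step M ⟨U, q, V⟩ none ⟨U, q', V⟩
  | sched {q q' : Q} {U V : Core → List (Instr Core Op)} {c : Core}
      {idx : ℕ} {st : Stage} (hidx : idx < (U c).length) :
      (q, heads V, q', Act.sched c idx st) ∈ M.Δ →
      Step M ⟨U, q, V⟩ (some ⟨(U c).get ⟨idx, hidx⟩, st⟩) ⟨U, q', V⟩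
  | drop {q q' : Q} {U V : Core → List (Instr Core Op)} {c : Core} {idx : ℕ} :
      idx < (U c).length →
      (q, heads V, q', Act.drop c idx) ∈ M.Δ →
      Step M ⟨U, q, V⟩ none ⟨Function.update U c ((U c).eraseIdx idx), q', V⟩

/-- Reachability through allowed configurations, accumulating the trace of
emitted events. -/
inductive Reach {Core Stage Op Q : Type} [DecidableEq Core]
    (M : OpModel Core Stage Op Q) :
    Config Core Op Q → List (Event Core Stage Op) → Config Core Op Q → Prop
  | refl (γ : Config Core Op Q) : Allowed M.hist γ → Reach M γ [] γ
  | step {γ0 : Config Core Op Q} {tr : List (Event Core Stage Op)}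
      {γ1 γ2 : Config Core Op Q} {ev : Option (Event Core Stage Op)} :
      Reach M γ0 tr γ1 → Step M γ1 ev γ2 → Allowed M.hist γ2 →
      Reach M γ0 (tr ++ ev.toList) γ2

/-- The instruction stream of core `c`, as a list of instructions. -/
def streamInstrs {Core Op : Type} (P : Program Core Op) (c : Core) :
    List (Instr Core Op) :=
  (P c).zipIdx.map fun jo => ⟨c, jo.2, jo.1⟩

/-- The initial configuration on program `P`: empty left tapes, control state
`q_init`, and each right tape holding the corresponding instruction stream. -/
def initConfig {Core Stage Op Q : Type} (M : OpModel Core Stage Op Q)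
    (P : Program Core Op) : Config Core Op Q :=
  ⟨fun _ => [], M.qinit, fun c => streamInstrs P c⟩

/-- `Traces(M, P)`: traces of accepting runs of `M` on `P`. -/
def Traces {Core Stage Op Q : Type} [DecidableEq Core]
    (M : OpModel Core Stage Op Q) (P : Program Core Op) :
    Set (List (Event Core Stage Op)) :=
  {tr | ∃ γ, Reach M (initConfig M P) tr γ ∧ γ.q = M.qfinal}

/-- Soundness on a fixed program: every accepted trace is a linearization of
some valid μhb graph. -/
def SoundOn {Core Stage Op Q PSym : Type} [DecidableEq Core] {ar : PSym → ℕ}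
    (interp : ∀ p : PSym, (Fin (ar p) → Op) → Prop)
    (M : OpModel Core Stage Op Q) (A : List (UAxiom Stage PSym ar))
    (P : Program Core Op) : Prop :=
  ∀ σ ∈ Traces M P, ∃ E, IsMuHb (events Stage P) E ∧ Models interp P E A ∧
    IsLinearization P E σ

/-- Soundness: soundness on every program. -/
def Sound {Core Stage Op Q PSym : Type} [DecidableEq Core] {ar : PSym → ℕ}
    (interp : ∀ p : PSym, (Fin (ar p) → Op) → Prop)
    (M : OpModel Core Stage Op Q) (A : List (UAxiom Stage PSym ar)) : Prop :=
  ∀ P : Program Core Op, SoundOn interp M A P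

/-- Completeness on a fixed program: every linearization of every valid μhb
graph is an accepted trace. -/
def CompleteOn {Core Stage Op Q PSym : Type} [DecidableEq Core] {ar : PSym → ℕ}
    (interp : ∀ p : PSym, (Fin (ar p) → Op) → Prop)
    (M : OpModel Core Stage Op Q) (A : List (UAxiom Stage PSym ar))
    (P : Program Core Op) : Prop :=
  ∀ E : Event Core Stage Op → Event Core Stage Op → Prop,
    IsMuHb (events Stage P) E → Models interp P E A →
    ∀ σ, IsLinearization P E σ → σ ∈ Traces M P

/-- Completeness: completeness on every program. -/
def Complete {Core Stage Op Q PSym : Type} [DecidableEq Core] {ar : PSym → ℕ}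
    (interp : ∀ p : PSym, (Fin (ar p) → Op) → Prop)
    (M : OpModel Core Stage Op Q) (A : List (UAxiom Stage PSym ar)) : Prop :=
  ∀ P : Program Core Op, CompleteOn interp M A P

/-- The stage set `{S, T}`. -/
inductive Stg : Type
  | S
  | T
  deriving DecidableEq

/-- Arity function for the empty family of predicate symbols. -/
def emptyAr : Empty → ℕ := fun p => p.elim

/-- The (vacuous) interpretation of the empty family of predicate symbols. -/
def noPreds {Op : Type} : ∀ p : Empty, (Fin (emptyAr p) → Op) → Prop :=
  fun p => p.elim

/-- `ax0 : ∀ i1. hb(i1.S, i1.T)`. -/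
def axZero : UAxiom Stg Empty emptyAr := ⟨1, .hb 0 .S 0 .T⟩

/-- `ax1 : ∀ i1 i2. hb(i1.S, i2.S) ⇒ hb(i1.T, i2.T)`. -/
def axOne : UAxiom Stg Empty emptyAr :=
  ⟨2, .disj (.neg (.hb 0 .S 1 .S)) (.hb 0 .T 1 .T)⟩

/-- The semantics `A#`. -/
def Ahash : List (UAxiom Stg Empty emptyAr) := [axZero, axOne]

/-- The single-core program with `m` (identical, trivial) instructions. -/
def singleCoreProg (m : ℕ) : Program Unit Unit := fun _ => List.replicate m ()


/-! For `f ⊆ {0, …, m - 2}`, emit the `S`-events of `f ∪ {m - 1}`, then the remaining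
`S`-events, then all `T`-events. This linearizes the valid graph whose only edges are
`i.S → i.T`, so completeness makes it accepted. After the first block the head is at the end
of the tape (the last instruction has been scheduled) and nothing has been dropped (every
instruction still has its `T`-event to come), so the configuration there is determined by its
control state. Two different `f` reaching the same state could be crossed into an accepted
word that emits some `S`-event twice or never, contradicting soundness. Hence
`|Q| ≥ 2^(m-1) ≥ 2^m / (2m)`. -/

namespace Config

variable {Core Op Q : Type}

def tape (γ : Config Core Op Q) (c : Core) : List (Instr Core Op) := γ.U c ++ γ.V c

end Config

section Runs

variable {Core Stage Op Q : Type} [DecidableEq Core] {M : OpModel Core Stage Op Q}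

theorem Step.tape_sublist {γ γ' : Config Core Op Q} {ev : Option (Event Core Stage Op)}
    (h : Step M γ ev γ') (c : Core) : (γ'.tape c).Sublist (γ.tape c) := by
  cases h with
  | @right _ _ _ _ c' _ _ _ hV =>
    by_cases hc : c = c'
    · subst hc
      simp [Config.tape, hV]
    · simp [Config.tape, Function.update_of_ne hc]
  | stay _ => exact .refl _
  | sched _ _ => exact .refl _
  | @drop _ _ U V c' idx _ _ =>
    by_cases hc : c = c'
    · subst hc
      simpa [Config.tape] using (List.eraseIdx_sublist (U c) idx).append_right (V c)
    · simp [Config.tape, Function.update_of_ne hc]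

theorem Step.V_suffix {γ γ' : Config Core Op Q} {ev : Option (Event Core Stage Op)}
    (h : Step M γ ev γ') (c : Core) : γ'.V c <:+ γ.V c := by
  cases h with
  | @right _ _ _ _ c' _ _ _ hV =>
    by_cases hc : c = c'
    · subst hc
      simp [hV]
    · simp [Function.update_of_ne hc]
  | stay _ | sched _ _ | drop _ _ => exact List.suffix_refl _

theorem Step.exists_instr_mem_U {γ γ' : Config Core Op Q} {e : Event Core Stage Op}
    (h : Step M γ (some e) γ') : ∃ c, e.instr ∈ γ.U c := by
  cases h with
  | sched hidx _ => exact ⟨_, List.get_mem _ _⟩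

theorem Reach.append {γ₀ γ₁ γ₂ : Config Core Op Q} {s t : List (Event Core Stage Op)}
    (h₁ : Reach M γ₀ s γ₁) (h₂ : Reach M γ₁ t γ₂) : Reach M γ₀ (s ++ t) γ₂ := by
  induction h₂ with
  | refl => simpa using h₁
  | step _ hS hA ih => simpa using ih.step hS hA

theorem Reach.exists_split {γ₀ γ₂ : Config Core Op Q} {s t : List (Event Core Stage Op)}
    (h : Reach M γ₀ (s ++ t) γ₂) : ∃ γ₁, Reach M γ₀ s γ₁ ∧ Reach M γ₁ t γ₂ := by
  generalize htr : s ++ t = tr at h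
  induction h generalizing t with
  | refl hA =>
    obtain ⟨rfl, rfl⟩ := List.append_eq_nil_iff.mp htr
    exact ⟨γ₀, .refl γ₀ hA, .refl γ₀ hA⟩
  | @step tr' γ γ' ev hR hS hA ih =>
    rcases List.eq_nil_or_concat' t with rfl | ⟨t', x, rfl⟩
    · exact ⟨γ', by simpa [← htr] using hR.step hS hA, .refl γ' hA⟩
    cases ev with
    | none =>
      obtain ⟨γ₁, h₁, h₂⟩ := ih (t := t' ++ [x]) (by simpa using htr)
      exact ⟨γ₁, h₁, by simpa using h₂.step hS hA⟩
    | some e =>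
      obtain ⟨htr', rfl⟩ : s ++ t' = tr' ∧ x = e := by
        simpa [← List.append_assoc] using htr
      obtain ⟨γ₁, h₁, h₂⟩ := ih htr'
      exact ⟨γ₁, h₁, h₂.step hS hA⟩

theorem Reach.tape_sublist {γ₀ γ₁ : Config Core Op Q} {tr : List (Event Core Stage Op)}
    (h : Reach M γ₀ tr γ₁) (c : Core) : (γ₁.tape c).Sublist (γ₀.tape c) := by
  induction h with
  | refl => exact .refl _
  | step _ hS _ ih => exact (hS.tape_sublist c).trans ih

theorem Reach.V_suffix {γ₀ γ₁ : Config Core Op Q} {tr : List (Event Core Stage Op)}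
    (h : Reach M γ₀ tr γ₁) (c : Core) : γ₁.V c <:+ γ₀.V c := by
  induction h with
  | refl => exact List.suffix_refl _
  | step _ hS _ ih => exact (hS.V_suffix c).trans ih

/-- Events are emitted from the left of a head, heads only move right and tapes only
shrink, so an instruction whose event was emitted never reappears to the right of that head. -/
theorem Reach.exists_mem_tape_not_mem_V {γ₀ γ₁ : Config Core Op Q}
    {tr : List (Event Core Stage Op)} (h : Reach M γ₀ tr γ₁)
    (hnd : ∀ c, (γ₀.tape c).Nodup) {e : Event Core Stage Op} (he : e ∈ tr) :
    ∃ c, e.instr ∈ γ₀.tape c ∧ e.instr ∉ γ₁.V c := by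
  induction h with
  | refl => simp at he
  | step hR hS _ ih =>
    rcases List.mem_append.mp he with he | he
    · obtain ⟨c, hmem, hV⟩ := ih he
      exact ⟨c, hmem, fun h' => hV ((hS.V_suffix c).subset h')⟩
    · obtain rfl : _ = some e := Option.mem_toList.mp he
      obtain ⟨c, hU⟩ := hS.exists_instr_mem_U
      have hnd' := (hR.tape_sublist c).nodup (hnd c)
      refine ⟨c, (hR.tape_sublist c).subset (List.mem_append_left _ hU), fun h' => ?_⟩
      exact List.disjoint_of_nodup_append hnd' hU ((hS.V_suffix c).subset h')

end Runs

section SingleCore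

def instrAt (j : ℕ) : Instr Unit Unit := ⟨(), j, ()⟩

def sEv (j : ℕ) : Event Unit Stg Unit := ⟨instrAt j, .S⟩

def tEv (j : ℕ) : Event Unit Stg Unit := ⟨instrAt j, .T⟩

theorem instrAt_injective : Function.Injective instrAt :=
  fun _ _ h => congrArg Instr.lbl h

theorem sEv_injective : Function.Injective sEv :=
  fun _ _ h => instrAt_injective (congrArg Event.instr h)

theorem tEv_injective : Function.Injective tEv :=
  fun _ _ h => instrAt_injective (congrArg Event.instr h)

@[simp] theorem sEv_lbl (j : ℕ) : (sEv j).instr.lbl = j := rfl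

@[simp] theorem tEv_lbl (j : ℕ) : (tEv j).instr.lbl = j := rfl

theorem Event.exists_eq_sEv_or_eq_tEv (e : Event Unit Stg Unit) :
    ∃ j, e = sEv j ∨ e = tEv j := by
  obtain ⟨⟨⟨⟩, j, ⟨⟩⟩, _ | _⟩ := e <;> exact ⟨j, by simp [sEv, tEv, instrAt]⟩

theorem mem_instrs_singleCoreProg {m : ℕ} {i : Instr Unit Unit} :
    i ∈ instrs (singleCoreProg m) ↔ i.lbl < m := by
  simp [instrs, singleCoreProg, List.getElem?_replicate]

theorem mem_events_singleCoreProg {m : ℕ} {e : Event Unit Stg Unit} :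
    e ∈ events Stg (singleCoreProg m) ↔ e.instr.lbl < m :=
  mem_instrs_singleCoreProg

theorem streamInstrs_singleCoreProg (m : ℕ) :
    streamInstrs (singleCoreProg m) () = (List.range m).map instrAt := by
  apply List.ext_getElem <;> simp [streamInstrs, singleCoreProg, instrAt]

variable {Q : Type} {M : OpModel Unit Stg Unit Q}

def endConfig (m : ℕ) (q : Q) : Config Unit Unit Q :=
  ⟨fun _ => (List.range m).map instrAt, q, fun _ => []⟩

/-- Once an event of the last instruction has been emitted the head is at the end of the
tape, and if every instruction still has an event to come, nothing can have been dropped. -/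
theorem eq_endConfig_of_reach {m : ℕ} {p t : List (Event Unit Stg Unit)}
    {γ γ' : Config Unit Unit Q} (hp : Reach M (initConfig M (singleCoreProg m)) p γ)
    (ht : Reach M γ t γ') (hlast : ∃ e ∈ p, e.instr = instrAt (m - 1))
    (hall : ∀ j < m, ∃ e ∈ t, e.instr = instrAt j) : γ = endConfig m γ.q := by
  have hinit : (initConfig M (singleCoreProg m)).tape () = (List.range m).map instrAt := by
    simp [Config.tape, initConfig, streamInstrs_singleCoreProg]
  have hnd : ((List.range m).map instrAt).Nodup := List.nodup_range.map instrAt_injective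
  have hsub : (γ.tape ()).Sublist ((List.range m).map instrAt) := hinit ▸ hp.tape_sublist ()
  have hV : γ.V () = [] := by
    have hsuf : γ.V () <:+ (List.range m).map instrAt := by
      simpa [initConfig, streamInstrs_singleCoreProg] using hp.V_suffix ()
    obtain ⟨e, he, hei⟩ := hlast
    obtain ⟨⟨⟩, -, hnotin⟩ := hp.exists_mem_tape_not_mem_V (fun _ => hinit ▸ hnd) he
    rcases m with _ | n
    · simpa using hsuf
    rw [List.range_succ, List.map_append, List.map_singleton, List.suffix_concat_iff] at hsuf
    obtain hsuf | ⟨l, hl, -⟩ := hsuf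
    · exact hsuf
    · simp [hl, hei] at hnotin
  have hU : γ.U () = (List.range m).map instrAt := by
    have hUsub : (γ.U ()).Sublist ((List.range m).map instrAt) := by
      simpa [Config.tape, hV] using hsub
    refine hUsub.eq_of_length (le_antisymm hUsub.length_le (hnd.length_le_of_subset ?_))
    simp only [List.subset_def, List.mem_map, List.mem_range]
    rintro _ ⟨j, hj, rfl⟩
    obtain ⟨e, he, hei⟩ := hall j hj
    obtain ⟨⟨⟩, hmem, -⟩ := ht.exists_mem_tape_not_mem_V (fun _ => hsub.nodup hnd) he
    simpa [Config.tape, hV, hei] using hmem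
  obtain ⟨U, q, V⟩ := γ
  simp only [endConfig, Config.mk.injEq, true_and]
  exact ⟨funext fun _ => hU, funext fun _ => hV⟩

end SingleCore

theorem listEdge_append {α : Type} {s t : List α} {x y : α} (hx : x ∈ s) (hy : y ∈ t) :
    listEdge (s ++ t) x y := by
  obtain ⟨i, hi, rfl⟩ := List.mem_iff_getElem.mp hx
  obtain ⟨j, hj, rfl⟩ := List.mem_iff_getElem.mp hy
  refine ⟨i, s.length + j, by omega, ?_, ?_⟩ <;> simp [List.getElem?_append_left, hi, hj]

section StageEdges

variable {Core Op : Type} (P : Program Core Op)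

def stageEdges (e₁ e₂ : Event Core Stg Op) : Prop :=
  e₁.instr = e₂.instr ∧ e₁.instr ∈ instrs P ∧ e₁.stage = .S ∧ e₂.stage = .T

variable {P}

theorem transGen_stageEdges_iff {e₁ e₂ : Event Core Stg Op} :
    Relation.TransGen (stageEdges P) e₁ e₂ ↔ stageEdges P e₁ e₂ := by
  refine ⟨fun h => ?_, .single⟩
  induction h with
  | single h => exact h
  | tail _ h₂ ih => cases ih.2.2.2.symm.trans h₂.2.2.1

theorem isMuHb_stageEdges : IsMuHb (events Stg P) (stageEdges P) := by
  refine ⟨fun e₁ e₂ h => ⟨h.2.1, show e₂.instr ∈ instrs P from h.1 ▸ h.2.1⟩, fun e h => ?_⟩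
  have h := transGen_stageEdges_iff.mp h
  cases h.2.2.2.symm.trans h.2.2.1

theorem models_stageEdges : Models noPreds P (stageEdges P) Ahash := by
  simp only [Models, Ahash, List.mem_cons, List.not_mem_nil, or_false, forall_eq_or_imp,
    forall_eq, GraphSatAx, SatAx]
  refine ⟨fun s _ hs => .single ⟨rfl, hs ⟨0, Nat.one_pos⟩, rfl, rfl⟩,
    fun s _ _ => Or.inl fun h => ?_⟩
  cases (transGen_stageEdges_iff.mp h).2.2.2

theorem isLinearization_stageEdges {xs ys : List (Event Core Stg Op)}
    (hσ : IsPermTrace P (xs ++ ys)) (hxs : ∀ e ∈ xs, e.stage = .S)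
    (hys : ∀ e ∈ ys, e.stage = .T) : IsLinearization P (stageEdges P) (xs ++ ys) := by
  refine ⟨hσ, fun e₁ e₂ h => ?_⟩
  obtain ⟨hi, hmem, h₁, h₂⟩ := transGen_stageEdges_iff.mp h
  have he₁ : e₁ ∈ xs ++ ys := (hσ.2 e₁).mpr hmem
  have he₂ : e₂ ∈ xs ++ ys := (hσ.2 e₂).mpr (show e₂.instr ∈ instrs P from hi ▸ hmem)
  refine listEdge_append ((List.mem_append.mp he₁).resolve_right fun h => ?_)
    ((List.mem_append.mp he₂).resolve_left fun h => ?_)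
  · cases h₁.symm.trans (hys e₁ h)
  · cases h₂.symm.trans (hxs e₂ h)

end StageEdges

section FoolingWords

variable (m : ℕ)

def sEventsOf (p : ℕ → Prop) [DecidablePred p] : List (Event Unit Stg Unit) :=
  ((List.range m).filter fun j => p j).map sEv

def tEvents : List (Event Unit Stg Unit) := (List.range m).map tEv

variable {m} {p : ℕ → Prop} [DecidablePred p] {j : ℕ}

@[simp] theorem sEv_mem_sEventsOf : sEv j ∈ sEventsOf m p ↔ j < m ∧ p j := by
  simp [sEventsOf, sEv_injective.eq_iff]

@[simp] theorem tEv_not_mem_sEventsOf : tEv j ∉ sEventsOf m p := by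
  simp [sEventsOf, sEv, tEv]

@[simp] theorem tEv_mem_tEvents : tEv j ∈ tEvents m ↔ j < m := by
  simp [tEvents, tEv_injective.eq_iff]

@[simp] theorem sEv_not_mem_tEvents : sEv j ∉ tEvents m := by
  simp [tEvents, sEv, tEv]

theorem isPermTrace_sEventsOf_append :
    IsPermTrace (singleCoreProg m) (sEventsOf m p ++ (sEventsOf m (¬ p ·) ++ tEvents m)) := by
  have hS (q : ℕ → Prop) [DecidablePred q] : (sEventsOf m q).Nodup :=
    (List.nodup_range.filter _).map sEv_injective
  have hT : (tEvents m).Nodup := List.nodup_range.map tEv_injective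
  refine ⟨List.nodup_append.mpr ⟨hS _, List.nodup_append.mpr ⟨hS _, hT, ?_⟩, ?_⟩, fun e => ?_⟩
  · rintro e he _ he' rfl
    obtain ⟨j, rfl | rfl⟩ := e.exists_eq_sEv_or_eq_tEv <;> simp_all
  · rintro e he _ he' rfl
    obtain ⟨j, rfl | rfl⟩ := e.exists_eq_sEv_or_eq_tEv <;> simp_all
  · rw [mem_events_singleCoreProg]
    obtain ⟨j, rfl | rfl⟩ := e.exists_eq_sEv_or_eq_tEv <;> simp [← and_or_left, em]

theorem iff_of_isPermTrace_sEventsOf_append {q : ℕ → Prop} [DecidablePred q]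
    (h : IsPermTrace (singleCoreProg m) (sEventsOf m p ++ (sEventsOf m (¬ q ·) ++ tEvents m))) :
    ∀ j < m, (p j ↔ q j) := by
  intro j hj
  have hmem : sEv j ∈ _ := (h.2 (sEv j)).mpr (mem_events_singleCoreProg.mpr hj)
  have hdisj := List.disjoint_of_nodup_append h.1
  constructor
  · intro hp
    by_contra hq
    exact hdisj (sEv_mem_sEventsOf.mpr ⟨hj, hp⟩)
      (List.mem_append_left _ (sEv_mem_sEventsOf.mpr ⟨hj, hq⟩))
  · intro hq
    simpa [hj, hq] using hmem

end FoolingWords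

/-- A fooling-set argument: the runs on two words with the same state at the cut can be
crossed. -/
theorem card_le_card_of_fooling {Core Stage Op Q ι : Type} [DecidableEq Core] [Fintype Q]
    {M : OpModel Core Stage Op Q} {P : Program Core Op} (S : Finset ι)
    (p t : ι → List (Event Core Stage Op)) (γ : Q → Config Core Op Q)
    (hacc : ∀ x ∈ S, p x ++ t x ∈ Traces M P)
    (hcut : ∀ x ∈ S, ∀ γ₁ γ₂, Reach M (initConfig M P) (p x) γ₁ → Reach M γ₁ (t x) γ₂ →
      γ₁ = γ γ₁.q)
    (hcross : ∀ x ∈ S, ∀ y ∈ S, p x ++ t y ∈ Traces M P → x = y) :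
    S.card ≤ Fintype.card Q := by
  have hmid : ∀ x ∈ S, ∃ q, Reach M (initConfig M P) (p x) (γ q) ∧
      ∃ γ₂, Reach M (γ q) (t x) γ₂ ∧ γ₂.q = M.qfinal := by
    intro x hx
    obtain ⟨γ₂, hrun, hfin⟩ := hacc x hx
    obtain ⟨γ₁, h₁, h₂⟩ := hrun.exists_split
    have hγ₁ := hcut x hx γ₁ γ₂ h₁ h₂
    exact ⟨γ₁.q, hγ₁ ▸ h₁, γ₂, hγ₁ ▸ h₂, hfin⟩
  have : Nonempty Q := ⟨M.qinit⟩
  choose! F hpre hsuf using hmid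
  refine Finset.card_le_card_of_injOn F (fun _ _ => Finset.mem_univ _) fun x hx y hy hxy => ?_
  obtain ⟨γ₂, h₂, hfin⟩ := hsuf x hx
  exact (hcross y hy x hx ⟨γ₂, (hpre y hy).append (hxy ▸ h₂), hfin⟩).symm

section LowerBound

variable {Q : Type} {M : OpModel Unit Stg Unit Q} {m : ℕ}

theorem sEventsOf_append_mem_traces (hcomplete : CompleteOn noPreds M Ahash (singleCoreProg m))
    (p : ℕ → Prop) [DecidablePred p] :
    sEventsOf m p ++ (sEventsOf m (¬ p ·) ++ tEvents m) ∈ Traces M (singleCoreProg m) := by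
  rw [← List.append_assoc]
  refine hcomplete _ isMuHb_stageEdges models_stageEdges _ (isLinearization_stageEdges ?_ ?_ ?_)
  · rw [List.append_assoc]
    exact isPermTrace_sEventsOf_append
  all_goals
    intro e he
    obtain ⟨j, rfl | rfl⟩ := e.exists_eq_sEv_or_eq_tEv <;> first | rfl | simp_all

theorem two_pow_le_card [Fintype Q] (hm : 1 ≤ m)
    (hsound : SoundOn noPreds M Ahash (singleCoreProg m))
    (hcomplete : CompleteOn noPreds M Ahash (singleCoreProg m)) :
    2 ^ (m - 1) ≤ Fintype.card Q := by
  have hcard := card_le_card_of_fooling (M := M) (P := singleCoreProg m)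
    (Finset.range (m - 1)).powerset (fun f => sEventsOf m (fun j => j ∈ f ∨ j = m - 1))
    (fun f => sEventsOf m (fun j => ¬ (j ∈ f ∨ j = m - 1)) ++ tEvents m) (endConfig m)
    (fun f _ => sEventsOf_append_mem_traces hcomplete _) ?_ ?_
  · simpa using hcard
  · intro f _ γ₁ γ₂ h₁ h₂
    have hlast : sEv (m - 1) ∈ sEventsOf m (fun j => j ∈ f ∨ j = m - 1) :=
      sEv_mem_sEventsOf.mpr ⟨by omega, .inr rfl⟩
    exact eq_endConfig_of_reach h₁ h₂ ⟨_, hlast, rfl⟩ fun j hj => ⟨tEv j, by simp [hj], rfl⟩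
  · intro f hf g hg hfg
    obtain ⟨E, -, -, hlin⟩ := hsound _ hfg
    have hiff := iff_of_isPermTrace_sEventsOf_append hlin.1
    rw [Finset.mem_powerset] at hf hg
    ext j
    constructor <;> intro h
    · have hj := Finset.mem_range.mp (hf h)
      simpa [hj.ne] using (hiff j (by omega)).mp (Or.inl h)
    · have hj := Finset.mem_range.mp (hg h)
      simpa [hj.ne] using (hiff j (by omega)).mpr (Or.inl h)

end LowerBound

/-- **Impossibility of small sound and complete models for `A#`** (Thm. 1).
There is a constant `c > 0` such that for every `m ≥ 1`, every operational
model `M` with a finite state set `Q` that is sound and complete with respect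
to `A#` on the single-core program with `m` instructions — even with unbounded
history `h = ∞` — satisfies `|Q| ≥ c * 2^m / m`. -/
theorem no_small_sound_complete_model :
    ∃ c : ℝ, 0 < c ∧ ∀ m : ℕ, 1 ≤ m →
      ∀ (Q : Type) [Fintype Q], ∀ M : OpModel Unit Stg Unit Q,
        M.hist = ⊤ →
        SoundOn noPreds M Ahash (singleCoreProg m) →
        CompleteOn noPreds M Ahash (singleCoreProg m) →
        c * 2 ^ m / m ≤ (Fintype.card Q : ℝ) := by
  refine ⟨1 / 2, by norm_num, fun m hm Q _ M _ hsound hcomplete => ?_⟩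
  have hcard : (2 : ℝ) ^ (m - 1) ≤ Fintype.card Q := by
    exact_mod_cast two_pow_le_card hm hsound hcomplete
  calc 1 / 2 * 2 ^ m / m ≤ 1 / 2 * (2 : ℝ) ^ m :=
        div_le_self (by positivity) (by exact_mod_cast hm)
    _ = 2 ^ (m - 1) := by
      obtain ⟨n, rfl⟩ := Nat.exists_eq_add_of_le' hm
      rw [Nat.add_sub_cancel, pow_succ]
      ring
    _ ≤ Fintype.card Q := hcard

end USpec
end

section
/- For every program P, every t-reordering bounded trace σ ∈ events(P)^perm, and every index 0 ≤ j ≤ |σ|, the set of in-progress instructions satisfies |IP(j)| ≤ |Cores| · t. -/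
namespace USpec

/-- Positions in the trace `σ` at which an event of instruction `i` occurs. -/
def evIdx {Core Stage Op : Type} (σ : List (Event Core Stage Op))
    (i : Instr Core Op) : Set ℕ :=
  {n | ∃ st, σ[n]? = some ⟨i, st⟩}

/-- `start(i)`: least position of an event of `i` in `σ`. -/
noncomputable def startIdx {Core Stage Op : Type} (σ : List (Event Core Stage Op))
    (i : Instr Core Op) : ℕ :=
  sInf (evIdx σ i)

/-- `end(i)`: greatest position of an event of `i` in `σ`. -/
noncomputable def endIdx {Core Stage Op : Type} (σ : List (Event Core Stage Op))
    (i : Instr Core Op) : ℕ :=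
  sSup (evIdx σ i)

/-- `pfxend(i)`: max of `end(i')` over `i' = i` or `i' <_r i`. -/
noncomputable def pfxend {Core Stage Op : Type} (P : Program Core Op)
    (σ : List (Event Core Stage Op)) (i : Instr Core Op) : ℕ :=
  sSup {n | ∃ i' ∈ instrs P, (i' = i ∨ refLt i' i) ∧ n = endIdx σ i'}

/-- `coup(i1, i2)`: the intervals `[start(i1), pfxend(i1)]` and
`[start(i2), pfxend(i2)]` overlap. -/
def coup {Core Stage Op : Type} (P : Program Core Op)
    (σ : List (Event Core Stage Op)) (i1 i2 : Instr Core Op) : Prop :=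
  startIdx σ i1 ≤ pfxend P σ i2 ∧ startIdx σ i2 ≤ pfxend P σ i1

/-- `diff_r(i1, i2) = label(i2) − label(i1)` (for same-core instructions). -/
def diffR {Core Op : Type} (i1 i2 : Instr Core Op) : ℤ :=
  (i2.lbl : ℤ) - (i1.lbl : ℤ)

/-- `σ` is `t`-reordering bounded. -/
def TReorderBounded {Core Stage Op : Type} (t : ℕ) (P : Program Core Op)
    (σ : List (Event Core Stage Op)) : Prop :=
  ∀ i1 ∈ instrs P, ∀ i2 ∈ instrs P, i1.core = i2.core →
    ((∃ m n : ℕ, m < n ∧ (∃ st, σ[m]? = some ⟨i2, st⟩) ∧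
        (∃ st, σ[n]? = some ⟨i1, st⟩)) → diffR i1 i2 < (t : ℤ)) ∧
    ((∃ i ∈ instrs P, coup P σ i1 i ∧ coup P σ i i2) → |diffR i1 i2| < (t : ℤ))

/-- `CM(j)`: instructions all of whose events occur among the first `j`
events of `σ`. -/
def CM {Core Stage Op : Type} (P : Program Core Op)
    (σ : List (Event Core Stage Op)) (j : ℕ) : Set (Instr Core Op) :=
  {i ∈ instrs P | ∀ n ∈ evIdx σ i, n < j}

/-- `NF(j)`: instructions none of whose events occur among the first `j`
events of `σ`. -/
def NF {Core Stage Op : Type} (P : Program Core Op)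
    (σ : List (Event Core Stage Op)) (j : ℕ) : Set (Instr Core Op) :=
  {i ∈ instrs P | ∀ n ∈ evIdx σ i, j ≤ n}

/-- `pCM(j)`: the prefix-closed set of completed instructions. -/
def pCM {Core Stage Op : Type} (P : Program Core Op)
    (σ : List (Event Core Stage Op)) (j : ℕ) : Set (Instr Core Op) :=
  {i ∈ instrs P | ∀ i' ∈ instrs P, (i' = i ∨ refLt i' i) → i' ∈ CM P σ j}

/-- `pNF(j)`: the postfix-closed set of unfetched instructions. -/
def pNF {Core Stage Op : Type} (P : Program Core Op)
    (σ : List (Event Core Stage Op)) (j : ℕ) : Set (Instr Core Op) :=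
  {i ∈ instrs P | ∀ i' ∈ instrs P, (i' = i ∨ refLt i i') → i' ∈ NF P σ j}

/-- `IP(j)`: the in-progress instructions. -/
def IP {Core Stage Op : Type} (P : Program Core Op)
    (σ : List (Event Core Stage Op)) (j : ℕ) : Set (Instr Core Op) :=
  instrs P \ (pCM P σ j ∪ pNF P σ j)

/-- `i` and `i'` are `k`-coupled: there is a chain of `k` couplings from `i`
to `i'` through instructions of `P`. -/
def kCoupled {Core Stage Op : Type} (P : Program Core Op)
    (σ : List (Event Core Stage Op)) (k : ℕ) (i i' : Instr Core Op) : Prop :=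
  ∃ f : Fin (k + 1) → Instr Core Op, f 0 = i ∧ f (Fin.last k) = i' ∧
    (∀ m, f m ∈ instrs P) ∧ ∀ m : Fin k, coup P σ (f m.castSucc) (f m.succ)

/-- `AC_k(j)`: instructions of `pCM(j) ∪ IP(j)` that are `k`-coupled with some
in-progress instruction. -/
def AC {Core Stage Op : Type} (P : Program Core Op)
    (σ : List (Event Core Stage Op)) (k j : ℕ) : Set (Instr Core Op) :=
  {i ∈ pCM P σ j ∪ IP P σ j | ∃ i' ∈ IP P σ j, kCoupled P σ k i i'}

/-- **Bound on in-progress instructions** (Lemma 4): for every program `P`,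
every `t`-reordering bounded trace `σ ∈ events(P)^perm`, and every index
`0 ≤ j ≤ |σ|`, we have `|IP(j)| ≤ |Cores| ⬝ t`. -/
theorem IP_card_le
    {Core Stage Op : Type} [Fintype Core]
    (t : ℕ) (P : Program Core Op) (σ : List (Event Core Stage Op))
    (hperm : IsPermTrace P σ) (hbd : TReorderBounded t P σ)
    (j : ℕ) (hj : j ≤ σ.length) :
    (IP P σ j).ncard ≤ Fintype.card Core * t := by
  classical
  set a : Core → ℕ := fun c =>
    sInf {l | ∃ i' ∈ instrs P, i'.core = c ∧ i' ∉ CM P σ j ∧ i'.lbl = l} with ha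
  have key : ∀ i ∈ IP P σ j, a i.core ≤ i.lbl ∧ i.lbl < a i.core + t := by
    intro i hi
    obtain ⟨hiP, hnot⟩ := hi
    rw [Set.mem_union] at hnot
    push_neg at hnot
    obtain ⟨hnCM, hnNF⟩ := hnot
    -- witness from ¬pCM
    have h1 : ∃ i1 ∈ instrs P, (i1 = i ∨ refLt i1 i) ∧ i1 ∉ CM P σ j := by
      by_contra hcon
      push_neg at hcon
      exact hnCM ⟨hiP, fun i' hi' h => hcon i' hi' h⟩
    obtain ⟨i1, hi1P, hord1, hi1CM⟩ := h1
    have hcore1 : i1.core = i.core := by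
      rcases hord1 with rfl | ⟨hc, _⟩
      · rfl
      · exact hc
    have hlbl1 : i1.lbl ≤ i.lbl := by
      rcases hord1 with rfl | ⟨_, hl⟩ <;> omega
    have hne : ({l | ∃ i' ∈ instrs P, i'.core = i.core ∧ i' ∉ CM P σ j ∧ i'.lbl = l}).Nonempty :=
      ⟨i1.lbl, i1, hi1P, hcore1, hi1CM, rfl⟩
    have hale : a i.core ≤ i.lbl :=
      le_trans (Nat.sInf_le ⟨i1, hi1P, hcore1, hi1CM, rfl⟩) hlbl1
    refine ⟨hale, ?_⟩
    -- the minimal non-completed instruction on this core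
    obtain ⟨i1s, hi1sP, hc1s, hnCM1s, hlbl1s⟩ := Nat.sInf_mem hne
    have hev1 : ∃ n ∈ evIdx σ i1s, j ≤ n := by
      by_contra hcon
      push_neg at hcon
      exact hnCM1s ⟨hi1sP, fun n hn => hcon n hn⟩
    obtain ⟨n, hnev, hjn⟩ := hev1
    -- witness from ¬pNF
    have h2 : ∃ i2 ∈ instrs P, (i2 = i ∨ refLt i i2) ∧ i2 ∉ NF P σ j := by
      by_contra hcon
      push_neg at hcon
      exact hnNF ⟨hiP, fun i' hi' h => hcon i' hi' h⟩
    obtain ⟨i2, hi2P, hord2, hi2NF⟩ := h2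
    have hcore2 : i2.core = i.core := by
      rcases hord2 with rfl | ⟨hc, _⟩
      · rfl
      · exact hc.symm
    have hlbl2 : i.lbl ≤ i2.lbl := by
      rcases hord2 with rfl | ⟨_, hl⟩ <;> omega
    have hev2 : ∃ m ∈ evIdx σ i2, m < j := by
      by_contra hcon
      push_neg at hcon
      exact hi2NF ⟨hi2P, fun m hm => hcon m hm⟩
    obtain ⟨m, hmev, hmj⟩ := hev2
    obtain ⟨st2, hst2⟩ := hmev
    obtain ⟨st1, hst1⟩ := hnev
    have hbound := (hbd i1s hi1sP i2 hi2P (by rw [hc1s, hcore2])).1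
      ⟨m, n, lt_of_lt_of_le hmj hjn, ⟨st2, hst2⟩, ⟨st1, hst1⟩⟩
    unfold diffR at hbound
    have haeq : a i.core = i1s.lbl := hlbl1s.symm
    omega
  -- instructions of P are determined by core and label
  have hdet : ∀ i ∈ instrs P, ∀ i' ∈ instrs P,
      i.core = i'.core → i.lbl = i'.lbl → i = i' := by
    rintro ⟨c, l, o⟩ hi ⟨c', l', o'⟩ hi' hc hl
    simp only at hc hl
    subst hc; subst hl
    simp only [instrs, Set.mem_setOf_eq] at hi hi'
    rw [hi] at hi'
    simp_all
  set f : Instr Core Op → Core × ℕ := fun i => (i.core, i.lbl - a i.core) with hf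
  have hmap : ∀ i ∈ IP P σ j,
      f i ∈ ((Finset.univ ×ˢ Finset.range t : Finset (Core × ℕ)) : Set (Core × ℕ)) := by
    intro i hi
    have := key i hi
    simp only [f, Finset.coe_product, Set.mem_prod, Finset.coe_univ, Set.mem_univ,
      Finset.coe_range, Set.mem_Iio, true_and]
    omega
  have hinj : Set.InjOn f (IP P σ j) := by
    intro i hi i' hi' hfe
    have h1 := key i hi
    have h2 := key i' hi'
    have hc : i.core = i'.core := congrArg Prod.fst hfe
    have hsub : i.lbl - a i.core = i'.lbl - a i'.core := congrArg Prod.snd hfe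
    rw [hc] at h1 hsub
    have hl : i.lbl = i'.lbl := by omega
    exact hdet i hi.1 i' hi'.1 hc hl
  calc (IP P σ j).ncard
      ≤ ((Finset.univ ×ˢ Finset.range t : Finset (Core × ℕ)) : Set (Core × ℕ)).ncard :=
        Set.ncard_le_ncard_of_injOn f hmap hinj (Finset.finite_toSet _)
    _ = Fintype.card Core * t := by
        rw [Set.ncard_coe_finset, Finset.card_product, Finset.card_univ, Finset.card_range]


end USpec
end

section
/- For every k and t there is a bound b_k ∈ ℕ, depending only on k, t and |Cores| and not on the program, such that for every program P, every t-reordering bounded trace σ ∈ events(P)^perm, and every index 0 ≤ j ≤ |σ|, the set of k-active instructions satisfies |AC_k(j)| ≤ b_k. -/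
/-!
An in-progress instruction `i` at position `j` has a successor `s` (possibly `i` itself) with
an event before `j` and a predecessor `p` with an event at or after `j`. Two such successors on
one core are coupled, so by clause (2) their labels differ by less than `t`, and by clause (1)
`s` runs fewer than `t` labels ahead of `p`; hence the in-progress instructions of each core lie
in a window of `2t` labels. By clause (2) again, the instructions coupled with a fixed one lie
in a window of `t` labels per core. Thus `AC_k(j)`, reached from `IP(j)` in `k` coupling steps,
has at most `|Cores| · 2t · (|Cores| · t)^k` elements.
-/
namespace USpec

section Counting

variable {α β : Type*}

lemma encard_le_of_forall_lt_add {A : Set ℕ} {w : ℕ} (h : ∀ a ∈ A, ∀ b ∈ A, b < a + w) :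
    A.encard ≤ w := by
  rcases A.eq_empty_or_nonempty with rfl | hA
  · simp
  have hsub : A ⊆ Set.Ico (sInf A) (sInf A + w) :=
    fun b hb => ⟨Nat.sInf_le hb, h _ (Nat.sInf_mem hA) b hb⟩
  calc A.encard ≤ (Set.Ico (sInf A) (sInf A + w)).encard := Set.encard_le_encard hsub
    _ = w := by rw [← Finset.coe_Ico, Set.encard_coe_eq_coe_finsetCard]; simp

lemma encard_biUnion_le_mul (s : Set α) (N : α → Set β) {d : ℕ∞}
    (hN : ∀ y ∈ s, (N y).encard ≤ d) : (⋃ y ∈ s, N y).encard ≤ s.encard * d := by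
  rcases s.finite_or_infinite with hs | hs
  · lift s to Finset α using hs
    calc (⋃ y ∈ (s : Set α), N y).encard ≤ ∑ y ∈ s, (N y).encard := by
          simpa using s.set_encard_biUnion_le N
      _ ≤ ∑ _y ∈ s, d := Finset.sum_le_sum hN
      _ = (s : Set α).encard * d := by simp [nsmul_eq_mul]
  · rcases eq_or_ne d 0 with rfl | hd
    · simp_all
    · simp [hs.encard_eq, ENat.top_mul hd]

end Counting

section Instructions

variable {Core Op : Type} {P : Program Core Op}

lemma eq_of_mem_instrs {a b : Instr Core Op} (ha : a ∈ instrs P) (hb : b ∈ instrs P)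
    (hc : a.core = b.core) (hl : a.lbl = b.lbl) : a = b := by
  obtain ⟨c, l, o⟩ := a
  obtain ⟨c', l', o'⟩ := b
  dsimp only at hc hl
  subst hc hl
  have : some o = some o' := ha.symm.trans hb
  simp_all

lemma core_eq_and_lbl_le {a b : Instr Core Op} (h : a = b ∨ refLt a b) :
    a.core = b.core ∧ a.lbl ≤ b.lbl := by
  rcases h with rfl | h
  · exact ⟨rfl, le_rfl⟩
  · exact ⟨h.1, h.2.le⟩

lemma eq_or_refLt_trans {a b c : Instr Core Op} (hab : a = b ∨ refLt a b)
    (hbc : b = c ∨ refLt b c) : a = c ∨ refLt a c := by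
  rcases hab with rfl | hab
  · exact hbc
  rcases hbc with rfl | hbc
  · exact Or.inr hab
  · exact Or.inr ⟨hab.1.trans hbc.1, hab.2.trans hbc.2⟩

lemma encard_le_card_mul_of_lbl_lt_add [Fintype Core] {S : Set (Instr Core Op)} {w : ℕ}
    (hS : S ⊆ instrs P) (h : ∀ a ∈ S, ∀ b ∈ S, a.core = b.core → b.lbl < a.lbl + w) :
    S.encard ≤ Fintype.card Core * w := by
  have hfiber : ∀ c, {i ∈ S | i.core = c}.encard ≤ w := by
    intro c
    have hinj : Set.InjOn Instr.lbl {i ∈ S | i.core = c} := fun a ha b hb hab =>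
      eq_of_mem_instrs (hS ha.1) (hS hb.1) (ha.2.trans hb.2.symm) hab
    rw [← hinj.encard_image]
    refine encard_le_of_forall_lt_add ?_
    rintro _ ⟨a, ha, rfl⟩ _ ⟨b, hb, rfl⟩
    exact h a ha.1 b hb.1 (ha.2.trans hb.2.symm)
  calc S.encard = (⋃ c, {i ∈ S | i.core = c}).encard := by
        congr 1; ext i; simp
    _ ≤ ∑ c, {i ∈ S | i.core = c}.encard := Set.encard_iUnion_le_of_fintype _
    _ ≤ ∑ _c : Core, (w : ℕ∞) := Finset.sum_le_sum fun c _ => hfiber c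
    _ = Fintype.card Core * w := by simp

end Instructions

section Trace

variable {Core Stage Op : Type} {P : Program Core Op} {σ : List (Event Core Stage Op)}

lemma startIdx_le {i : Instr Core Op} {n : ℕ} (h : n ∈ evIdx σ i) : startIdx σ i ≤ n :=
  Nat.sInf_le h

lemma le_endIdx {i : Instr Core Op} {n : ℕ} (h : n ∈ evIdx σ i) : n ≤ endIdx σ i := by
  refine le_csSup ⟨σ.length, fun m ⟨_, hm⟩ => ?_⟩ h
  exact (List.getElem?_eq_some_iff.mp hm).1.le

lemma endIdx_le_length (i : Instr Core Op) : endIdx σ i ≤ σ.length := by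
  rcases (evIdx σ i).eq_empty_or_nonempty with h | h
  · simp [endIdx, h]
  · exact csSup_le h fun n ⟨_, hn⟩ => (List.getElem?_eq_some_iff.mp hn).1.le

lemma endIdx_le_pfxend {i i' : Instr Core Op} (h : i' ∈ instrs P)
    (hrel : i' = i ∨ refLt i' i) : endIdx σ i' ≤ pfxend P σ i := by
  refine le_csSup ⟨σ.length, ?_⟩ ⟨i', h, hrel, rfl⟩
  rintro _ ⟨i'', -, -, rfl⟩
  exact endIdx_le_length i''

lemma le_pfxend {i i' : Instr Core Op} {n : ℕ} (h : i' ∈ instrs P)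
    (hrel : i' = i ∨ refLt i' i) (hn : n ∈ evIdx σ i') : n ≤ pfxend P σ i :=
  (le_endIdx hn).trans (endIdx_le_pfxend h hrel)

lemma coup_refl {i : Instr Core Op} (h : i ∈ instrs P) : coup P σ i i := by
  rcases (evIdx σ i).eq_empty_or_nonempty with he | ⟨n, hn⟩
  · simp [coup, startIdx, he]
  · have := (startIdx_le hn).trans (le_pfxend h (Or.inl rfl) hn)
    exact ⟨this, this⟩

lemma coup_comm {a b : Instr Core Op} : coup P σ a b ↔ coup P σ b a :=
  and_comm

end Trace

section ReorderBounded

variable {Core Stage Op : Type} {P : Program Core Op} {σ : List (Event Core Stage Op)}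
  {t j : ℕ}

lemma encard_coup_le [Fintype Core] (hbd : TReorderBounded t P σ) {x : Instr Core Op}
    (hx : x ∈ instrs P) : {y ∈ instrs P | coup P σ y x}.encard ≤ Fintype.card Core * t := by
  refine encard_le_card_mul_of_lbl_lt_add (fun y hy => hy.1) fun a ha b hb hc => ?_
  have h := (hbd a ha.1 b hb.1 hc).2 ⟨x, hx, ha.2, coup_comm.mp hb.2⟩
  simp only [diffR, abs_lt] at h
  omega

lemma exists_straddle_of_mem_IP {i : Instr Core Op} (hi : i ∈ IP P σ j) :
    ∃ s ∈ instrs P, ∃ p ∈ instrs P, (i = s ∨ refLt i s) ∧ (p = i ∨ refLt p i) ∧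
      (∃ n ∈ evIdx σ s, n < j) ∧ ∃ n ∈ evIdx σ p, j ≤ n := by
  obtain ⟨hiP, hnot⟩ := hi
  simp only [Set.mem_union, not_or, pCM, pNF, CM, NF, Set.mem_ofPred_eq] at hnot
  push Not at hnot
  obtain ⟨p, hp, hpi, hpCM⟩ := hnot.1 hiP
  obtain ⟨s, hs, his, hsNF⟩ := hnot.2 hiP
  obtain ⟨n, hn, hjn⟩ := hpCM hp
  obtain ⟨m, hm, hmj⟩ := hsNF hs
  exact ⟨s, hs, p, hp, his.imp_left Eq.symm, hpi, ⟨m, hm, hmj⟩, n, hn, hjn⟩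

lemma lbl_lt_add_of_mem_IP (hbd : TReorderBounded t P σ) {a b : Instr Core Op}
    (ha : a ∈ IP P σ j) (hb : b ∈ IP P σ j) (hc : a.core = b.core) :
    b.lbl < a.lbl + 2 * t := by
  obtain ⟨sa, hsa, pa, hpa, hasa, hpaa, ⟨na, hna, hnaj⟩, ma, hma, hjma⟩ :=
    exists_straddle_of_mem_IP ha
  obtain ⟨sb, hsb, pb, hpb, hbsb, hpbb, ⟨nb, hnb, hnbj⟩, mb, hmb, hjmb⟩ :=
    exists_straddle_of_mem_IP hb
  have hcoup : coup P σ sa sb :=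
    ⟨by linarith [startIdx_le hna, le_pfxend hpb (eq_or_refLt_trans hpbb hbsb) hmb],
     by linarith [startIdx_le hnb, le_pfxend hpa (eq_or_refLt_trans hpaa hasa) hma]⟩
  obtain ⟨hcsa, hlsa⟩ := core_eq_and_lbl_le hasa
  obtain ⟨hcsb, hlsb⟩ := core_eq_and_lbl_le hbsb
  obtain ⟨hcpa, hlpa⟩ := core_eq_and_lbl_le hpaa
  have hs := (hbd sa hsa sb hsb (by rw [← hcsa, ← hcsb, hc])).2 ⟨sb, hsb, hcoup, coup_refl hsb⟩
  have hp := (hbd pa hpa sa hsa (hcpa.trans hcsa)).1 ⟨na, ma, by omega, hna, hma⟩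
  simp only [diffR, abs_lt] at hs hp
  omega

lemma encard_IP_le [Fintype Core] (hbd : TReorderBounded t P σ) :
    (IP P σ j).encard ≤ Fintype.card Core * (2 * t) :=
  encard_le_card_mul_of_lbl_lt_add (fun _ hi => hi.1) fun _ ha _ hb hc =>
    lbl_lt_add_of_mem_IP hbd ha hb hc

lemma kCoupled_zero {i i' : Instr Core Op} (h : kCoupled P σ 0 i i') : i = i' := by
  obtain ⟨f, hf0, hfl, -⟩ := h
  exact hf0.symm.trans hfl

lemma kCoupled_succ {m : ℕ} {i i' : Instr Core Op} (h : kCoupled P σ (m + 1) i i') :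
    ∃ y ∈ instrs P, coup P σ i y ∧ kCoupled P σ m y i' := by
  obtain ⟨f, hf0, hfl, hfP, hfc⟩ := h
  refine ⟨f 1, hfP 1, hf0 ▸ hfc 0, Fin.tail f, rfl, ?_, fun p => hfP _, fun p => ?_⟩
  · rw [← hfl, Fin.tail, Fin.succ_last]
  · simpa only [Fin.tail, Fin.succ_castSucc] using hfc p.succ

lemma encard_kCoupled_le [Fintype Core] (hbd : TReorderBounded t P σ)
    (S : Set (Instr Core Op)) (m : ℕ) :
    {i ∈ instrs P | ∃ i' ∈ S, kCoupled P σ m i i'}.encard ≤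
      S.encard * (Fintype.card Core * t) ^ m := by
  induction m with
  | zero =>
    rw [pow_zero, mul_one]
    refine Set.encard_le_encard fun i ⟨_, i', hi', hk⟩ => ?_
    rwa [kCoupled_zero hk]
  | succ m ih =>
    set R := {i ∈ instrs P | ∃ i' ∈ S, kCoupled P σ m i i'}
    have hsub : {i ∈ instrs P | ∃ i' ∈ S, kCoupled P σ (m + 1) i i'} ⊆
        ⋃ y ∈ R, {x ∈ instrs P | coup P σ x y} := by
      rintro i ⟨hi, i', hi', hk⟩
      obtain ⟨y, hy, hiy, hyi'⟩ := kCoupled_succ hk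
      exact Set.mem_biUnion ⟨hy, i', hi', hyi'⟩ ⟨hi, hiy⟩
    calc _ ≤ _ := Set.encard_le_encard hsub
      _ ≤ R.encard * (Fintype.card Core * t) :=
          encard_biUnion_le_mul _ _ fun y hy => encard_coup_le hbd hy.1
      _ ≤ S.encard * (Fintype.card Core * t) ^ m * (Fintype.card Core * t) := by gcongr
      _ = S.encard * (Fintype.card Core * t) ^ (m + 1) := by rw [pow_succ, mul_assoc]

end ReorderBounded

/-- **Bound on `k`-active instructions** (Lemma 5): for every `k` and `t`
there is a bound `b_k` — depending only on `k`, `t` and `|Cores|`, not on the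
program — such that for every program `P`, every `t`-reordering bounded trace
`σ ∈ events(P)^perm`, and every index `0 ≤ j ≤ |σ|`,
`|AC_k(j)| ≤ b_k`. -/
theorem AC_card_le
    (Core : Type) [Fintype Core] (k t : ℕ) :
    ∃ b : ℕ, ∀ (Stage Op : Type) (P : Program Core Op)
      (σ : List (Event Core Stage Op)),
      IsPermTrace P σ → TReorderBounded t P σ →
      ∀ j ≤ σ.length, (AC P σ k j).ncard ≤ b := by
  refine ⟨Fintype.card Core * (2 * t) * (Fintype.card Core * t) ^ k,
    fun Stage Op P σ _ hbd j _ => ?_⟩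
  have hAC : AC P σ k j ⊆ {i ∈ instrs P | ∃ i' ∈ IP P σ j, kCoupled P σ k i i'} :=
    fun i ⟨hi, hk⟩ => ⟨hi.elim (·.1) (·.1), hk⟩
  have hbound : (AC P σ k j).encard ≤
      (Fintype.card Core * (2 * t) * (Fintype.card Core * t) ^ k : ℕ) :=
    calc (AC P σ k j).encard ≤ (IP P σ j).encard * (Fintype.card Core * t) ^ k :=
          (Set.encard_le_encard hAC).trans (encard_kCoupled_le hbd _ k)
      _ ≤ Fintype.card Core * (2 * t) * (Fintype.card Core * t) ^ k := by
          gcongr; exact encard_IP_le hbd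
      _ = _ := by push_cast; rfl
  exact (Set.encard_le_coe_iff_finite_ncard_le.mp hbound).2

end USpec
end

section
/- Fix m ∈ ℕ and the alphabet Σ = Fin m ⊕ Fin m. Let L ⊆ Σ* be the language {(l.map inl) ++ (l.map inr) : l ∈ List (Fin m) contains each element of Fin m exactly once}. Then every deterministic finite automaton over Σ with a finite state type whose accepted language equals L has at least m! states. -/
/-- **A DFA for the copy-permutation language needs at least `m!` states.**
Over the alphabet `Fin m ⊕ Fin m`, consider the language of words
`(l.map inl) ++ (l.map inr)` where `l` lists every element of `Fin m` exactly
once.  Every DFA with a finite state type accepting exactly this language has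
at least `m!` states. -/
theorem dfa_perm_copy_language_states_ge_factorial
    (m : ℕ) (S : Type) [Fintype S] (A : DFA (Fin m ⊕ Fin m) S)
    (hL : A.accepts = {w : List (Fin m ⊕ Fin m) |
        ∃ l : List (Fin m), l.Nodup ∧ (∀ a : Fin m, a ∈ l) ∧
          w = l.map Sum.inl ++ l.map Sum.inr}) :
    Nat.factorial m ≤ Fintype.card S := by
  have key : Function.Injective
      (fun σ : Equiv.Perm (Fin m) =>
        A.evalFrom A.start (((List.finRange m).map σ).map Sum.inl)) := by
    intro σ τ h
    simp only at h
    set l₁ := (List.finRange m).map σ with hl₁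
    set l₂ := (List.finRange m).map τ with hl₂
    have hnd : ∀ (ρ : Equiv.Perm (Fin m)),
        ((List.finRange m).map ρ).Nodup ∧ (∀ a, a ∈ (List.finRange m).map ρ) := by
      intro ρ
      constructor
      · exact (List.nodup_finRange m).map ρ.injective
      · intro a
        simp only [List.mem_map]
        exact ⟨ρ.symm a, List.mem_finRange _, ρ.apply_symm_apply a⟩
    -- the word l₁ ++ l₁ is accepted
    have hacc1 : l₁.map Sum.inl ++ l₁.map Sum.inr ∈ A.accepts := by
      rw [hL]
      exact ⟨l₁, (hnd σ).1, (hnd σ).2, rfl⟩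
    have hacc2 : l₂.map Sum.inl ++ l₁.map Sum.inr ∈ A.accepts := by
      rw [DFA.mem_accepts] at hacc1 ⊢
      simp only [DFA.eval] at hacc1 ⊢
      rw [DFA.evalFrom_of_append, ← h, ← DFA.evalFrom_of_append]
      exact hacc1
    rw [hL] at hacc2
    obtain ⟨l, hnodup, hall, heq⟩ := hacc2
    have hlen : l.length = m := by
      have : l.length ≤ m := by simpa using List.Nodup.length_le_card (α := Fin m) hnodup
      have h2 : m ≤ l.length := by
        have : (Finset.univ : Finset (Fin m)).card ≤ l.toFinset.card :=
          Finset.card_le_card (fun a _ => List.mem_toFinset.mpr (hall a))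
        calc m = (Finset.univ : Finset (Fin m)).card := by simp
          _ ≤ l.toFinset.card := this
          _ ≤ l.length := List.toFinset_card_le l
      omega
    have hlen1 : l₁.length = m := by simp [hl₁]
    have hlen2 : l₂.length = m := by simp [hl₂]
    have hinj := List.append_inj heq (by simp [hlen, hlen2])
    have hl2l : l₂ = l :=
      List.map_injective_iff.mpr Sum.inl_injective hinj.1
    have hl1l : l₁ = l :=
      List.map_injective_iff.mpr Sum.inr_injective hinj.2
    have : l₁ = l₂ := by rw [hl1l, hl2l]
    have hfun : ∀ a ∈ List.finRange m, σ a = τ a := List.map_eq_map_iff.mp this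
    ext a
    exact congrArg Fin.val (hfun a (List.mem_finRange a))
  calc Nat.factorial m = Fintype.card (Equiv.Perm (Fin m)) := by
        simp [Fintype.card_perm]
    _ ≤ Fintype.card S := Fintype.card_le_of_injective _ key
end

section
/- Let ax = ∀i1 ⋯ ∀ik φ be a universal axiom and P a program. A trace σ ∈ events(P)^perm satisfies ax if and only if for every injective assignment s of the variables of ax to instructions of P, the subsequence of σ consisting of the events in s(E(ax)), viewed as a linear μhb graph on those events, satisfies φ under s. -/
namespace USpec

/-! Happens-before in a trace is "occurs earlier", i.e. `[x, y]` is a sublist of the trace, and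
filtering a list preserves this relation between retained elements. Under an assignment `s`, the
happens-before atoms of `φ` only compare events of the instructions `s a`, which are exactly the
events the subsequence retains. -/

theorem listEdge_nil {α : Type} (x y : α) : ¬ listEdge [] x y := by
  rintro ⟨m, n, -, hx, -⟩
  simp at hx

theorem listEdge_cons {α : Type} {a x y : α} {l : List α} :
    listEdge (a :: l) x y ↔ a = x ∧ y ∈ l ∨ listEdge l x y := by
  constructor
  · rintro ⟨_ | m, _ | n, hmn, hx, hy⟩
    · omega
    · exact Or.inl ⟨by simpa using hx, List.mem_iff_getElem?.2 ⟨n, hy⟩⟩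
    · omega
    · exact Or.inr ⟨m, n, by omega, hx, hy⟩
  · rintro (⟨rfl, hy⟩ | ⟨m, n, hmn, hx, hy⟩)
    · obtain ⟨n, hn⟩ := List.mem_iff_getElem?.1 hy
      exact ⟨0, n + 1, n.succ_pos, rfl, hn⟩
    · exact ⟨m + 1, n + 1, by omega, hx, hy⟩

theorem listEdge_iff_pair_sublist {α : Type} {l : List α} {x y : α} :
    listEdge l x y ↔ [x, y].Sublist l := by
  induction l with
  | nil => simp [listEdge_nil]
  | cons a l ih =>
    rw [listEdge_cons, ih, List.sublist_cons_iff]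
    simp [and_comm, eq_comm, or_comm]

theorem listEdge_filter_iff {α : Type} (p : α → Bool) {l : List α} {x y : α}
    (hx : p x) (hy : p y) : listEdge (l.filter p) x y ↔ listEdge l x y := by
  simp only [listEdge_iff_pair_sublist]
  refine ⟨fun h => h.trans List.filter_sublist, fun h => ?_⟩
  simpa [hx, hy] using h.filter p

theorem sat_congr {Core Stage Op PSym : Type} {ar : PSym → ℕ} {k : ℕ}
    (interp : ∀ p : PSym, (Fin (ar p) → Op) → Prop)
    {R R' : Event Core Stage Op → Event Core Stage Op → Prop}
    (s : Fin k → Instr Core Op)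
    (h : ∀ a st b st', R ⟨s a, st⟩ ⟨s b, st'⟩ ↔ R' ⟨s a, st⟩ ⟨s b, st'⟩)
    (φ : Phi k Stage PSym ar) : Sat interp R s φ ↔ Sat interp R' s φ := by
  induction φ with
  | refOrd | pred => rfl
  | hb a st b st' => exact h a st b st'
  | conj _ _ ihφ ihψ => exact and_congr ihφ ihψ
  | disj _ _ ihφ ihψ => exact or_congr ihφ ihψ
  | neg _ ih => exact not_congr ih

theorem trace_sat_iff_subsequences_general
    {Core Stage Op PSym : Type} [DecidableEq Core] [DecidableEq Op]
    {ar : PSym → ℕ} (interp : ∀ p : PSym, (Fin (ar p) → Op) → Prop)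
    (ax : UAxiom Stage PSym ar) (P : Program Core Op)
    (σ : List (Event Core Stage Op)) :
    SatAx interp (instrs P) (listEdge σ) ax ↔
      ∀ s : Fin ax.k → Instr Core Op, Function.Injective s →
        (∀ a, s a ∈ instrs P) →
        Sat interp
          (listEdge (σ.filter fun e => decide (∃ a, s a = e.instr))) s
          ax.phi :=
  forall₃_congr fun s _ _ => sat_congr interp s
    (fun a _ b _ => (listEdge_filter_iff _ (by simp) (by simp)).symm) ax.phi

/-- **Trace satisfaction is determined by the per-assignment subsequences**: a
trace `σ ∈ events(P)^perm` satisfies the universal axiom `ax = ∀ i1 ⋯ ik, φ`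
iff for every injective assignment `s` of the variables of `ax` to
instructions of `P`, the subsequence of `σ` consisting of the events in
`s(E(ax))`, viewed as a linear μhb graph, satisfies `φ` under `s`. -/
theorem trace_sat_iff_subsequences
    {Core Stage Op PSym : Type} [DecidableEq Core] [DecidableEq Op]
    {ar : PSym → ℕ} (interp : ∀ p : PSym, (Fin (ar p) → Op) → Prop)
    (ax : UAxiom Stage PSym ar) (P : Program Core Op)
    (σ : List (Event Core Stage Op)) (hperm : IsPermTrace P σ) :
    SatAx interp (instrs P) (listEdge σ) ax ↔
      ∀ s : Fin ax.k → Instr Core Op, Function.Injective s →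
        (∀ a, s a ∈ instrs P) →
        Sat interp
          (listEdge (σ.filter fun e => decide (∃ a, s a = e.instr))) s
          ax.phi :=
  trace_sat_iff_subsequences_general interp ax P σ

end USpec
end
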